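/- Let X be an Archimedean vector lattice admitting a positively homogeneous continuous function calculus Φ, and let Y be a sublattice of X (a linear subspace closed under finite suprema and infima). Then Y admits a positively homogeneous continuous function calculus (with values in Y) if and only if Φ_y(ℋ_m) ⊆ Y for every m ∈ ℕ and every y = (y_1,…,y_m) ∈ Y^m. -/

import Mathlib

/-- A function `h : ℝ^m → ℝ` belongs to `ℋ_m` iff it is continuous and positively
homogeneous. -/
def IsPHC {m : ℕ} (h : (Fin m → ℝ) → ℝ) : Prop :=
  Continuous h ∧ ∀ (c : ℝ), 0 ≤ c → ∀ t : Fin m → ℝ, h (c • t) = c * h t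

/-!
A calculus `T` for a tuple `x` is linear and preserves `⊔`, so it is determined by `x` on the
vector sublattice generated by the coordinate projections. By the lattice Stone–Weierstrass
theorem on the `ℓ¹` unit sphere and positive homogeneity, every `h ∈ ℋ_m` is within
`ε ‖·‖₁` of such a lattice-linear `g`; as `T` is monotone, `T h` is within `ε T ‖·‖₁` of `T g`,
and the Archimedean property makes any two calculi for `x` agree. So a calculus on `Y` can only
be the restriction of `Φ`, and that restriction exists exactly when `Φ` maps tuples from `Y`
into `Y`.
-/

namespace IsPHC

variable {m : ℕ} {h g : (Fin m → ℝ) → ℝ}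

lemma add (hh : IsPHC h) (hg : IsPHC g) : IsPHC (h + g) :=
  ⟨hh.1.add hg.1, fun c hc t => by simp [hh.2 c hc t, hg.2 c hc t, mul_add]⟩

lemma sub (hh : IsPHC h) (hg : IsPHC g) : IsPHC (h - g) :=
  ⟨hh.1.sub hg.1, fun c hc t => by simp [hh.2 c hc t, hg.2 c hc t, mul_sub]⟩

lemma smul (a : ℝ) (hh : IsPHC h) : IsPHC (a • h) :=
  ⟨hh.1.const_smul a, fun c hc t => by simp [hh.2 c hc t, mul_left_comm]⟩

lemma sup (hh : IsPHC h) (hg : IsPHC g) : IsPHC (h ⊔ g) :=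
  ⟨hh.1.max hg.1, fun c hc t => by simp [hh.2 c hc t, hg.2 c hc t, mul_max_of_nonneg _ _ hc]⟩

lemma zero : IsPHC (0 : (Fin m → ℝ) → ℝ) :=
  ⟨continuous_const, fun _ _ _ => by simp⟩

lemma proj (k : Fin m) : IsPHC (fun t : Fin m → ℝ => t k) :=
  ⟨continuous_apply k, fun _ _ _ => rfl⟩

lemma map_zero (hh : IsPHC h) : h 0 = 0 := by
  simpa using hh.2 0 le_rfl 0

end IsPHC

def sumAbs {m : ℕ} (t : Fin m → ℝ) : ℝ := ∑ k, |t k|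

lemma abs_le_sumAbs {m : ℕ} (t : Fin m → ℝ) (k : Fin m) : |t k| ≤ sumAbs t :=
  Finset.single_le_sum (fun i _ => abs_nonneg (t i)) (Finset.mem_univ k)

lemma sumAbs_pos {m : ℕ} {t : Fin m → ℝ} (ht : t ≠ 0) : 0 < sumAbs t := by
  obtain ⟨k, hk⟩ := Function.ne_iff.mp ht
  exact (abs_pos.mpr hk).trans_le (abs_le_sumAbs t k)

lemma isPHC_sumAbs (m : ℕ) : IsPHC (sumAbs (m := m)) :=
  ⟨continuous_finsetSum _ fun k _ => (continuous_apply k).abs, fun c hc t => by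
    simp [sumAbs, abs_mul, abs_of_nonneg hc, Finset.mul_sum]⟩

lemma isCompact_sumAbs_eq_one (m : ℕ) : IsCompact {t : Fin m → ℝ | sumAbs t = 1} := by
  refine (isCompact_closedBall 0 1).of_isClosed_subset
    (isClosed_eq (isPHC_sumAbs m).1 continuous_const) fun t ht => ?_
  rw [mem_closedBall_zero_iff, pi_norm_le_iff_of_nonneg zero_le_one]
  exact fun k => (abs_le_sumAbs t k).trans_eq ht

lemma IsPHC.abs_le_mul_sumAbs {m : ℕ} {f : (Fin m → ℝ) → ℝ} (hf : IsPHC f) {ε : ℝ}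
    (hε : ∀ t, sumAbs t = 1 → |f t| ≤ ε) (t : Fin m → ℝ) : |f t| ≤ ε * sumAbs t := by
  rcases eq_or_ne t 0 with rfl | ht
  · simp [hf.map_zero, sumAbs]
  have hN := sumAbs_pos ht
  have hz : sumAbs ((sumAbs t)⁻¹ • t) = 1 := by
    rw [(isPHC_sumAbs m).2 _ (inv_nonneg.mpr hN.le), inv_mul_cancel₀ hN.ne']
  calc |f t| = |sumAbs t * f ((sumAbs t)⁻¹ • t)| := by
        rw [← hf.2 _ hN.le, smul_inv_smul₀ hN.ne']
    _ = sumAbs t * |f ((sumAbs t)⁻¹ • t)| := by rw [abs_mul, abs_of_pos hN]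
    _ ≤ ε * sumAbs t := by rw [mul_comm]; exact mul_le_mul_of_nonneg_right (hε _ hz) hN.le

inductive IsLatticeLinear {m : ℕ} : ((Fin m → ℝ) → ℝ) → Prop
  | zero : IsLatticeLinear 0
  | proj (k : Fin m) : IsLatticeLinear fun t => t k
  | add {f g} : IsLatticeLinear f → IsLatticeLinear g → IsLatticeLinear (f + g)
  | smul (c : ℝ) {f} : IsLatticeLinear f → IsLatticeLinear (c • f)
  | sup {f g} : IsLatticeLinear f → IsLatticeLinear g → IsLatticeLinear (f ⊔ g)

namespace IsLatticeLinear

variable {m : ℕ} {f g : (Fin m → ℝ) → ℝ}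

lemma inf (hf : IsLatticeLinear f) (hg : IsLatticeLinear g) : IsLatticeLinear (f ⊓ g) := by
  have : f ⊓ g = (-1 : ℝ) • ((-1 : ℝ) • f ⊔ (-1 : ℝ) • g) := by simp [neg_sup]
  rw [this]
  exact .smul _ (.sup (.smul _ hf) (.smul _ hg))

lemma isPHC (hf : IsLatticeLinear f) : IsPHC f := by
  induction hf with
  | zero => exact .zero
  | proj k => exact .proj k
  | add _ _ ihf ihg => exact ihf.add ihg
  | smul c _ ih => exact ih.smul c
  | sup _ _ ihf ihg => exact ihf.sup ihg

end IsLatticeLinear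

lemma isLatticeLinear_sumAbs (m : ℕ) : IsLatticeLinear (sumAbs (m := m)) := by
  have : sumAbs (m := m) = ∑ k, ((fun t => t k) ⊔ (-1 : ℝ) • fun t => t k) := by
    funext t
    simp [sumAbs, abs_eq_max_neg]
  rw [this]
  exact Finset.sum_induction _ _ (fun _ _ => .add) .zero fun k _ =>
    .sup (.proj k) (.smul _ (.proj k))

theorem Submodule.separatesPointsStrongly_of_one_mem {α 𝕜 : Type*} [TopologicalSpace α]
    [Field 𝕜] [TopologicalSpace 𝕜] [IsTopologicalRing 𝕜] {S : Submodule 𝕜 C(α, 𝕜)}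
    (one_mem : 1 ∈ S) (sep : ∀ x y, x ≠ y → ∃ f ∈ S, f x ≠ f y) :
    (S : Set C(α, 𝕜)).SeparatesPointsStrongly := by
  intro v x y
  by_cases hxy : x = y
  · subst hxy
    exact ⟨v x • 1, S.smul_mem _ one_mem, by simp, by simp⟩
  obtain ⟨f, hfS, hf⟩ := sep x y hxy
  have hf' : f x - f y ≠ 0 := sub_ne_zero_of_ne hf
  refine ⟨((v y - v x) * (f x - f y)⁻¹) • (f x • 1 - f) + v x • 1,
    S.add_mem (S.smul_mem _ (S.sub_mem (S.smul_mem _ one_mem) hfS)) (S.smul_mem _ one_mem),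
    by simp, ?_⟩
  simp [inv_mul_cancel_right₀ hf']

def latticeLinearOn {m : ℕ} (K : Set (Fin m → ℝ)) : Submodule ℝ C(K, ℝ) where
  carrier := {f | ∃ g : (Fin m → ℝ) → ℝ, IsLatticeLinear g ∧ ∀ z : K, f z = g z}
  add_mem' := by
    rintro _ _ ⟨g, hg, hgf⟩ ⟨g', hg', hgf'⟩
    exact ⟨g + g', hg.add hg', fun z => by simp [hgf z, hgf' z]⟩
  zero_mem' := ⟨0, .zero, fun _ => rfl⟩
  smul_mem' := by
    rintro c _ ⟨g, hg, hgf⟩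
    exact ⟨c • g, hg.smul c, fun z => by simp [hgf z]⟩

lemma mem_latticeLinearOn {m : ℕ} {K : Set (Fin m → ℝ)} {f : C(K, ℝ)} :
    f ∈ latticeLinearOn K ↔ ∃ g : (Fin m → ℝ) → ℝ, IsLatticeLinear g ∧ ∀ z : K, f z = g z :=
  Iff.rfl

lemma exists_isLatticeLinear_abs_sub_lt {m : ℕ} {h : (Fin m → ℝ) → ℝ} (hh : Continuous h)
    {ε : ℝ} (hε : 0 < ε) :
    ∃ g, IsLatticeLinear g ∧ ∀ t, sumAbs t = 1 → |h t - g t| < ε := by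
  set K := {t : Fin m → ℝ | sumAbs t = 1}
  have : CompactSpace K := isCompact_iff_compactSpace.mp (isCompact_sumAbs_eq_one m)
  set L := latticeLinearOn K
  have sup_mem : ∀ f ∈ L, ∀ f' ∈ L, f ⊔ f' ∈ L := by
    simp only [L, mem_latticeLinearOn]
    rintro _ ⟨g, hg, hgf⟩ _ ⟨g', hg', hgf'⟩
    exact ⟨g ⊔ g', hg.sup hg', fun z => by simp [hgf z, hgf' z]⟩
  have inf_mem : ∀ f ∈ L, ∀ f' ∈ L, f ⊓ f' ∈ L := by
    simp only [L, mem_latticeLinearOn]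
    rintro _ ⟨g, hg, hgf⟩ _ ⟨g', hg', hgf'⟩
    exact ⟨g ⊓ g', hg.inf hg', fun z => by simp [hgf z, hgf' z]⟩
  have one_mem : (1 : C(K, ℝ)) ∈ L :=
    mem_latticeLinearOn.mpr ⟨sumAbs, isLatticeLinear_sumAbs m, fun z => z.2.symm⟩
  have sep : ∀ x y : K, x ≠ y → ∃ f ∈ L, f x ≠ f y := by
    intro x y hxy
    obtain ⟨k, hk⟩ := Function.ne_iff.mp (Subtype.coe_ne_coe.mpr hxy)
    exact ⟨⟨fun z => (z : Fin m → ℝ) k, (continuous_apply k).comp continuous_subtype_val⟩,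
      mem_latticeLinearOn.mpr ⟨_, .proj k, fun _ => rfl⟩, hk⟩
  have hclosure := ContinuousMap.sublattice_closure_eq_top (L : Set C(K, ℝ)) ⟨0, L.zero_mem⟩
    inf_mem sup_mem (Submodule.separatesPointsStrongly_of_one_mem one_mem sep)
  have hmem : ⟨fun z => h z, hh.comp continuous_subtype_val⟩ ∈ closure (L : Set C(K, ℝ)) := by
    rw [hclosure]; trivial
  obtain ⟨f, hf, hdist⟩ := Metric.mem_closure_iff.mp hmem ε hε
  obtain ⟨g, hg, hgf⟩ := mem_latticeLinearOn.mp hf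
  refine ⟨g, hg, fun t ht => ?_⟩
  have := (ContinuousMap.dist_lt_iff hε).mp hdist ⟨t, ht⟩
  rwa [hgf, Real.dist_eq] at this

lemma exists_isLatticeLinear_abs_sub_le {m : ℕ} {h : (Fin m → ℝ) → ℝ} (hh : IsPHC h)
    {ε : ℝ} (hε : 0 < ε) :
    ∃ g, IsLatticeLinear g ∧ ∀ t, |h t - g t| ≤ ε * sumAbs t := by
  obtain ⟨g, hg, hgh⟩ := exists_isLatticeLinear_abs_sub_lt hh.1 hε
  exact ⟨g, hg, (hh.sub hg.isPHC).abs_le_mul_sumAbs fun t ht => (hgh t ht).le⟩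

section Calculus

variable {X : Type*} [Lattice X] [AddCommGroup X] [Module ℝ X]

lemma le_of_forall_le_add_smul [AddLeftMono X]
    (harch : ∀ x y : X, (∀ n : ℕ, n • x ≤ y) → x ≤ 0) {a b D : X}
    (h : ∀ ε : ℝ, 0 < ε → a ≤ b + ε • D) : a ≤ b := by
  refine sub_nonpos.mp (harch _ (D ⊔ 0) fun n => ?_)
  rcases n.eq_zero_or_pos with rfl | hn
  · simp
  have hn' : (0 : ℝ) < n := Nat.cast_pos.mpr hn
  calc n • (a - b) ≤ n • ((n : ℝ)⁻¹ • D) :=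
        nsmul_le_nsmul_right (sub_le_iff_le_add'.mpr (h _ (inv_pos.mpr hn'))) n
    _ = D := by rw [← Nat.cast_smul_eq_nsmul ℝ, smul_smul, mul_inv_cancel₀ hn'.ne', one_smul]
    _ ≤ D ⊔ 0 := le_sup_left

structure IsPHCalculus {m : ℕ} (x : Fin m → X) (T : ((Fin m → ℝ) → ℝ) → X) : Prop where
  map_add : ∀ h g, IsPHC h → IsPHC g → T (h + g) = T h + T g
  map_smul : ∀ (c : ℝ) h, IsPHC h → T (c • h) = c • T h
  map_sup : ∀ h g, IsPHC h → IsPHC g → T (h ⊔ g) = T h ⊔ T g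
  map_proj : ∀ k, T (fun t => t k) = x k

namespace IsPHCalculus

variable {m : ℕ} {x : Fin m → X} {T S : ((Fin m → ℝ) → ℝ) → X}

lemma map_zero (hT : IsPHCalculus x T) : T 0 = 0 := by
  simpa using hT.map_smul 0 0 .zero

lemma mono (hT : IsPHCalculus x T) {h g : (Fin m → ℝ) → ℝ} (hh : IsPHC h) (hg : IsPHC g)
    (hle : h ≤ g) : T h ≤ T g := by
  rw [← sup_eq_right.mpr hle, hT.map_sup h g hh hg]
  exact le_sup_left

lemma eq_of_isLatticeLinear (hT : IsPHCalculus x T) (hS : IsPHCalculus x S)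
    {g : (Fin m → ℝ) → ℝ} (hg : IsLatticeLinear g) : T g = S g := by
  induction hg with
  | zero => rw [hT.map_zero, hS.map_zero]
  | proj k => rw [hT.map_proj, hS.map_proj]
  | add hf hg ihf ihg =>
    rw [hT.map_add _ _ hf.isPHC hg.isPHC, hS.map_add _ _ hf.isPHC hg.isPHC, ihf, ihg]
  | smul c hf ih => rw [hT.map_smul _ _ hf.isPHC, hS.map_smul _ _ hf.isPHC, ih]
  | sup hf hg ihf ihg =>
    rw [hT.map_sup _ _ hf.isPHC hg.isPHC, hS.map_sup _ _ hf.isPHC hg.isPHC, ihf, ihg]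

lemma map_le_add_smul_sumAbs (hT : IsPHCalculus x T) {h g : (Fin m → ℝ) → ℝ} (hh : IsPHC h)
    (hg : IsPHC g) {ε : ℝ} (hle : ∀ t, |h t - g t| ≤ ε * sumAbs t) :
    T h ≤ T g + ε • T sumAbs := by
  have hN := (isPHC_sumAbs m).smul ε
  calc T h ≤ T (g + ε • sumAbs) :=
        hT.mono hh (hg.add hN) fun t => by
          have := (abs_le.mp (hle t)).2
          simp only [Pi.add_apply, Pi.smul_apply, smul_eq_mul]
          linarith
    _ = T g + ε • T sumAbs := by rw [hT.map_add _ _ hg hN, hT.map_smul _ _ (isPHC_sumAbs m)]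

variable [AddLeftMono X]

lemma le (harch : ∀ x y : X, (∀ n : ℕ, n • x ≤ y) → x ≤ 0) (hT : IsPHCalculus x T)
    (hS : IsPHCalculus x S) {h : (Fin m → ℝ) → ℝ} (hh : IsPHC h) : T h ≤ S h := by
  refine le_of_forall_le_add_smul harch (D := T sumAbs + S sumAbs) fun ε hε => ?_
  obtain ⟨g, hg, hgh⟩ := exists_isLatticeLinear_abs_sub_le hh hε
  have hhg : ∀ t, |g t - h t| ≤ ε * sumAbs t := fun t => abs_sub_comm (h t) (g t) ▸ hgh t
  calc T h ≤ T g + ε • T sumAbs := hT.map_le_add_smul_sumAbs hh hg.isPHC hgh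
    _ = S g + ε • T sumAbs := by rw [hT.eq_of_isLatticeLinear hS hg]
    _ ≤ S h + ε • S sumAbs + ε • T sumAbs :=
        add_le_add_left (hS.map_le_add_smul_sumAbs hg.isPHC hh hhg) _
    _ = S h + ε • (T sumAbs + S sumAbs) := by rw [smul_add]; abel

lemma eq (harch : ∀ x y : X, (∀ n : ℕ, n • x ≤ y) → x ≤ 0) (hT : IsPHCalculus x T)
    (hS : IsPHCalculus x S) {h : (Fin m → ℝ) → ℝ} (hh : IsPHC h) : T h = S h :=
  le_antisymm (hT.le harch hS hh) (hS.le harch hT hh)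

end IsPHCalculus

end Calculus

theorem sublattice_admits_calculus_iff_invariant
    {X : Type*}
    [Lattice X] [AddCommGroup X] [Module ℝ X]
    [CovariantClass X X (· + ·) (· ≤ ·)]
    (harchX : ∀ x y : X, (∀ n : ℕ, n • x ≤ y) → x ≤ 0)
    -- the positively homogeneous continuous function calculus on `X`
    (Φ : ∀ m : ℕ, (Fin m → X) → ((Fin m → ℝ) → ℝ) → X)
    (hΦadd : ∀ (m) (x : Fin m → X) (h g), IsPHC h → IsPHC g →
      Φ m x (h + g) = Φ m x h + Φ m x g)
    (hΦsmul : ∀ (m) (x : Fin m → X) (c : ℝ) (h), IsPHC h → Φ m x (c • h) = c • Φ m x h)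
    (hΦsup : ∀ (m) (x : Fin m → X) (h g), IsPHC h → IsPHC g →
      Φ m x (h ⊔ g) = Φ m x h ⊔ Φ m x g)
    (hΦproj : ∀ (m) (x : Fin m → X) (k : Fin m), Φ m x (fun t => t k) = x k)
    -- the sublattice `Y`
    (Y : Submodule ℝ X) :
    (∃ Ψ : ∀ m : ℕ, (Fin m → Y) → ((Fin m → ℝ) → ℝ) → Y,
      (∀ (m) (y : Fin m → Y) (h g), IsPHC h → IsPHC g →
        (Ψ m y (h + g) : X) = (Ψ m y h : X) + (Ψ m y g : X)) ∧
      (∀ (m) (y : Fin m → Y) (c : ℝ) (h), IsPHC h →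
        (Ψ m y (c • h) : X) = c • (Ψ m y h : X)) ∧
      (∀ (m) (y : Fin m → Y) (h g), IsPHC h → IsPHC g →
        (Ψ m y (h ⊔ g) : X) = (Ψ m y h : X) ⊔ (Ψ m y g : X)) ∧
      (∀ (m) (y : Fin m → Y) (k : Fin m), (Ψ m y (fun t => t k) : X) = (y k : X))) ↔
    (∀ (m : ℕ) (y : Fin m → Y) (h : (Fin m → ℝ) → ℝ), IsPHC h →
      Φ m (fun k => (y k : X)) h ∈ Y) := by
  have hΦ : ∀ m x, IsPHCalculus x (Φ m x) := fun m x =>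
    ⟨hΦadd m x, hΦsmul m x, hΦsup m x, hΦproj m x⟩
  constructor
  · rintro ⟨Ψ, hadd, hsmul, hsup, hproj⟩ m y h hh
    have hΨ : IsPHCalculus (fun k => (y k : X)) fun h => (Ψ m y h : X) :=
      ⟨hadd m y, hsmul m y, hsup m y, hproj m y⟩
    rw [(hΦ m _).eq harchX hΨ hh]
    exact (Ψ m y h).2
  · intro hY
    classical
    refine ⟨fun m y h => if hh : IsPHC h then ⟨_, hY m y h hh⟩ else 0, ?_, ?_, ?_, ?_⟩
    · intro m y h g hh hg
      simp only [dif_pos (hh.add hg), dif_pos hh, dif_pos hg, hΦadd m _ h g hh hg]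
    · intro m y c h hh
      simp only [dif_pos (hh.smul c), dif_pos hh, hΦsmul m _ c h hh]
    · intro m y h g hh hg
      simp only [dif_pos (hh.sup hg), dif_pos hh, dif_pos hg, hΦsup m _ h g hh hg]
    · intro m y k
      simp only [dif_pos (IsPHC.proj k), hΦproj]
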